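/- arXiv:math/0403491 — 3 statements merged into one kernel-verified Lean document; each statement's English description precedes it below -/
import Mathlib

section
/- Let Q : ℝ → ℂ^{m×m} have locally integrable entries and let U_Q be the Carathéodory solution of U_Q' = (0, Q; −Q*, 0) U_Q, U_Q(0) = I_{2m}. Then U_Q conjugates N(Q) to i d/dx: for every locally absolutely continuous F : ℝ → ℂ^{2m}, N(Q)(U_Q F) = i U_Q F' almost everywhere on ℝ; equivalently U_Q^{−1} N(Q) U_Q = i (d/dx) I_{2m}. -/
open MeasureTheory

noncomputable section

/-- Index set for `ℂ^{2m}`, split into the two `m`-blocks. -/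
abbrev Idx (m : ℕ) := Sum (Fin m) (Fin m)

/-- `ℂ^{2m}` with its Euclidean (Hilbert space) structure. -/
abbrev Vec (m : ℕ) := EuclideanSpace ℂ (Idx m)

/-- A function is locally absolutely continuous iff it is the indefinite integral of a
locally integrable function. -/
def LocAC {E : Type*} [NormedAddCommGroup E] [NormedSpace ℝ E] (F : ℝ → E) : Prop :=
  ∃ g : ℝ → E, LocallyIntegrable g volume ∧ ∀ x : ℝ, F x = F 0 + ∫ t in (0:ℝ)..x, g t

/-- The Dirac-type differential expression `M(Q)F = i (F₁' - Q F₂, -Q* F₁ - F₂')ᵀ`. -/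
def Mop {m : ℕ} (Q : ℝ → Fin m → Fin m → ℂ) (F : ℝ → Vec m) : ℝ → Vec m := fun x => WithLp.toLp 2 <|
  Sum.elim
    (fun i => Complex.I * (deriv (fun y => F y (Sum.inl i)) x - ∑ j, Q x i j * F x (Sum.inr j)))
    (fun i => Complex.I * (-(∑ j, (starRingEnd ℂ) (Q x j i) * F x (Sum.inl j))
        - deriv (fun y => F y (Sum.inr i)) x))

/-- The formally self-adjoint differential expression `N(Q)F = i (F₁' - Q F₂, Q* F₁ + F₂')ᵀ`. -/
def Nop {m : ℕ} (Q : ℝ → Fin m → Fin m → ℂ) (F : ℝ → Vec m) : ℝ → Vec m := fun x => WithLp.toLp 2 <|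
  Sum.elim
    (fun i => Complex.I * (deriv (fun y => F y (Sum.inl i)) x - ∑ j, Q x i j * F x (Sum.inr j)))
    (fun i => Complex.I * ((∑ j, (starRingEnd ℂ) (Q x j i) * F x (Sum.inl j))
        + deriv (fun y => F y (Sum.inr i)) x))

/-- The coefficient matrix `A = (0, Q; -Q*, 0)` of the initial value problem `U' = A U`. -/
def Amat {m : ℕ} (Q : ℝ → Fin m → Fin m → ℂ) : ℝ → Idx m → Idx m → ℂ := fun x a b =>
  match a, b with
  | Sum.inl i, Sum.inr j => Q x i j
  | Sum.inr i, Sum.inl j => -(starRingEnd ℂ) (Q x j i)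
  | _, _ => 0

/-- `U` is the Carathéodory solution of `U' = (0, Q; -Q*, 0) U`, `U(0) = I_{2m}`: it is
continuous and satisfies the corresponding integral equation. -/
def IsCarSol {m : ℕ} (Q : ℝ → Fin m → Fin m → ℂ) (U : ℝ → Idx m → Idx m → ℂ) : Prop :=
  (∀ a b, Continuous fun x => U x a b) ∧
    ∀ (x : ℝ) (a b : Idx m),
      U x a b = (if a = b then 1 else 0) + ∫ t in (0:ℝ)..x, ∑ c, Amat Q t a c * U t c b

/-- Multiplication of a vector in `ℂ^{2m}` by a `2m × 2m` matrix. -/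
def mulVec' {m : ℕ} (A : Idx m → Idx m → ℂ) (v : Vec m) : Vec m := WithLp.toLp 2 fun a => ∑ c, A a c * v c

/-- The derivative `F'` of a vector-valued function, taken entrywise. -/
def derivVec {m : ℕ} (F : ℝ → Vec m) : ℝ → Vec m := fun x => WithLp.toLp 2 fun a => deriv (fun y => F y a) x

/-!
Writing `A = (0, Q; -Q*, 0)`, the expression `N(Q)` is `G ↦ i (G' - A G)`. By the Lebesgue
differentiation theorem, `U' = A U` and `F'` exist almost everywhere, and there the product rule
gives `(U F)' = A U F + U F'`, so `N(Q)(U F) = i U F'`.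
-/

open Filter

lemma LocAC.ae_differentiableAt {E : Type*} [NormedAddCommGroup E] [NormedSpace ℝ E]
    [CompleteSpace E] {F : ℝ → E} (hF : LocAC F) : ∀ᵐ x, DifferentiableAt ℝ F x := by
  obtain ⟨g, hg, hFg⟩ := hF
  filter_upwards [LocallyIntegrable.ae_hasDerivAt_integral hg] with x hx
  rw [funext hFg]
  exact ((hx 0).const_add (F 0)).differentiableAt

lemma locallyIntegrable_Amat {m : ℕ} {Q : ℝ → Fin m → Fin m → ℂ}
    (hQ : ∀ i j, LocallyIntegrable (fun x => Q x i j) volume) (a b : Idx m) :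
    LocallyIntegrable (fun x => Amat Q x a b) volume := by
  rcases a with i | i <;> rcases b with j | j
  · exact locallyIntegrable_const 0
  · exact hQ i j
  · exact LocallyIntegrable.neg fun x =>
      Complex.conjCLE.toContinuousLinearMap.integrableAtFilter_comp (hQ j i x)
  · exact locallyIntegrable_const 0

lemma IsCarSol.ae_hasDerivAt {m : ℕ} {Q : ℝ → Fin m → Fin m → ℂ} {U : ℝ → Idx m → Idx m → ℂ}
    (hQ : ∀ i j, LocallyIntegrable (fun x => Q x i j) volume) (hU : IsCarSol Q U) :
    ∀ᵐ x, ∀ a b, HasDerivAt (fun y => U y a b) (∑ c, Amat Q x a c * U x c b) x := by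
  simp only [ae_all_iff]
  intro a b
  have hAU : LocallyIntegrable (fun t => ∑ c, Amat Q t a c * U t c b) volume :=
    locallyIntegrable_finsetSum _ fun c _ =>
      (locallyIntegrable_Amat hQ a c).mul_continuous (hU.1 c b)
  filter_upwards [LocallyIntegrable.ae_hasDerivAt_integral hAU] with x hx
  rw [funext fun y => hU.2 y a b]
  exact (hx 0).const_add _

lemma Nop_apply {m : ℕ} (Q : ℝ → Fin m → Fin m → ℂ) (G : ℝ → Vec m) (x : ℝ) (a : Idx m) :
    Nop Q G x a = Complex.I * (deriv (fun y => G y a) x - ∑ c, Amat Q x a c * G x c) := by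
  rcases a with i | i
  · simp [Nop, Amat, Fintype.sum_sum_type]
  · simp [Nop, Amat, Fintype.sum_sum_type, add_comm]

lemma deriv_mulVec_sub_mulVec_of_hasDerivAt {ι : Type*} [Fintype ι] {A : ι → ι → ℂ}
    {U : ℝ → ι → ι → ℂ} {F : ℝ → ι → ℂ} {F' : ι → ℂ} {x : ℝ}
    (hU : ∀ a b, HasDerivAt (fun y => U y a b) (∑ c, A a c * U x c b) x)
    (hF : ∀ c, HasDerivAt (fun y => F y c) (F' c) x) (a : ι) :
    deriv (fun y => ∑ c, U y a c * F y c) x - ∑ c, A a c * ∑ d, U x c d * F x d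
      = ∑ c, U x a c * F' c := by
  rw [(HasDerivAt.fun_sum fun c _ => (hU a c).fun_mul (hF c)).deriv]
  simp only [Finset.sum_add_distrib, Finset.sum_mul, Finset.mul_sum, mul_assoc]
  rw [Finset.sum_comm]
  ring

/-- `U_Q` conjugates `N(Q)` into `i d/dx`: for every locally absolutely
continuous `F : ℝ → ℂ^{2m}`, `N(Q)(U_Q F) = i U_Q F'` a.e. on `ℝ`. -/
theorem Nop_conjugated_to_i_ddx (m : ℕ) (Q : ℝ → Fin m → Fin m → ℂ)
    (hQ : ∀ i j, LocallyIntegrable (fun x => Q x i j) volume)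
    (U : ℝ → Idx m → Idx m → ℂ) (hU : IsCarSol Q U)
    (F : ℝ → Vec m) (hF : LocAC F) :
    ∀ᵐ x ∂(volume : Measure ℝ), ∀ a : Idx m,
      Nop Q (fun y => mulVec' (U y) (F y)) x a =
        Complex.I * ∑ c, U x a c * deriv (fun y => F y c) x := by
  filter_upwards [hU.ae_hasDerivAt hQ, hF.ae_differentiableAt] with x hUx hFx a
  have hFc : ∀ c, HasDerivAt (fun y => F y c) (deriv (fun y => F y c) x) x := fun c =>
    ((EuclideanSpace.proj c : Vec m →L[ℂ] ℂ).restrictScalars ℝ |>.differentiableAt.comp x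
      hFx).hasDerivAt
  rw [Nop_apply]
  exact congrArg _ (deriv_mulVec_sub_mulVec_of_hasDerivAt hUx hFc a)
end
end

section
/- Let H be a complex Hilbert space, J a conjugation on H (an antilinear involution with ⟨Ju, v⟩ = ⟨Jv, u⟩ for all u, v ∈ H and J² = I), and S a densely defined closed J-symmetric operator in H. Then S is J-self-adjoint (S = J S* J) if and only if ker((S* J)² + I) = {0}, i.e., if and only if the only u ∈ H with Ju ∈ dom(S*), J S* J u ∈ dom(S*) and S* J S* J u = −u is u = 0. -/
noncomputable section

local notation "⟪" x ", " y "⟫" => @inner ℂ _ _ x y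

/-- Race: let `H` be a complex Hilbert space, `J` a conjugation on `H`
(antilinear involution with `⟪Ju, v⟫ = ⟪Jv, u⟫`), and `S` a densely defined closed
`J`-symmetric operator in `H`. Then `S` is `J`-self-adjoint, i.e. `S = J S* J`
(equality of domains and of values), if and only if `ker((S* J)² + I) = {0}`, i.e. the only
`u ∈ H` with `J u ∈ dom S*`, `J S* J u ∈ dom S*` and `S* J S* J u = -u` is `u = 0`. -/
theorem J_selfAdjoint_iff_ker_triv
    {H : Type*} [NormedAddCommGroup H] [InnerProductSpace ℂ H] [CompleteSpace H]
    (J : H → H)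
    (hJadd : ∀ u v : H, J (u + v) = J u + J v)
    (hJsmul : ∀ (c : ℂ) (u : H), J (c • u) = (starRingEnd ℂ) c • J u)
    (hJinv : ∀ u : H, J (J u) = u)
    (hJinner : ∀ u v : H, ⟪J u, v⟫ = ⟪J v, u⟫)
    (S : H →ₗ.[ℂ] H)
    (hdense : Dense (S.domain : Set H))
    (hclosed : IsClosed (S.graph : Set (H × H)))
    (hJsym : ∀ u v : S.domain, ⟪S v, J (u : H)⟫ = ⟪(v : H), J (S u)⟫) :
    ((∀ u : H, u ∈ S.domain ↔ J u ∈ S.adjoint.domain) ∧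
        ∀ (u : H) (hu : u ∈ S.domain) (hu' : J u ∈ S.adjoint.domain),
          S ⟨u, hu⟩ = J (S.adjoint ⟨J u, hu'⟩)) ↔
      (∀ (u : H) (h1 : J u ∈ S.adjoint.domain)
          (h2 : J (S.adjoint ⟨J u, h1⟩) ∈ S.adjoint.domain),
          S.adjoint ⟨J (S.adjoint ⟨J u, h1⟩), h2⟩ = -u → u = 0) := by
  have hJ0 : J 0 = 0 := by
    have h := hJsmul 0 0
    simpa using h
  have hJneg : ∀ u : H, J (-u) = -J u := fun u => by
    have h := hJsmul (-1) u
    simpa using h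
  have hJsub : ∀ u v : H, J (u - v) = J u - J v := fun u v => by
    rw [sub_eq_add_neg, hJadd, hJneg, ← sub_eq_add_neg]
  -- the key identity coming from `J`-symmetry
  have key : ∀ u x : S.domain, ⟪J (S u), (x : H)⟫ = ⟪J (u : H), S x⟫ := fun u x => by
    calc ⟪J (S u), (x : H)⟫ = (starRingEnd ℂ) ⟪(x : H), J (S u)⟫ := (inner_conj_symm _ _).symm
      _ = (starRingEnd ℂ) ⟪S x, J (u : H)⟫ := by rw [hJsym u x]
      _ = ⟪J (u : H), S x⟫ := inner_conj_symm _ _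
  -- `J`-symmetry: `S ⊆ J S* J`
  have hmem : ∀ (u : H) (hu : u ∈ S.domain), J u ∈ S.adjoint.domain := fun u hu =>
    LinearPMap.mem_adjoint_domain_of_exists _ ⟨J (S ⟨u, hu⟩), fun x => key ⟨u, hu⟩ x⟩
  have hval : ∀ (u : H) (hu : u ∈ S.domain) (h1 : J u ∈ S.adjoint.domain),
      S.adjoint ⟨J u, h1⟩ = J (S ⟨u, hu⟩) := fun u hu h1 =>
    LinearPMap.adjoint_apply_eq hdense _ (fun x => key ⟨u, hu⟩ x)
  constructor
  · -- forward direction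
    rintro ⟨hiff, hvals⟩ u h1 h2 heq
    set w := J (S.adjoint ⟨J u, h1⟩) with hw
    have hu : u ∈ S.domain := (hiff u).mpr h1
    have hSu : S ⟨u, hu⟩ = w := by rw [hvals u hu h1]
    have hp' : J (J w) ∈ S.adjoint.domain := by rw [hJinv]; exact h2
    have hpdom : J w ∈ S.domain := (hiff (J w)).mpr hp'
    have hSp : S ⟨J w, hpdom⟩ = -J u := by
      rw [hvals (J w) hpdom hp']
      have e1 : (⟨J (J w), hp'⟩ : S.adjoint.domain) = ⟨w, h2⟩ := Subtype.ext (hJinv w)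
      rw [e1, heq, hJneg]
    have hsym := hJsym ⟨u, hu⟩ ⟨J w, hpdom⟩
    rw [hSp, hSu] at hsym
    -- now `⟪-J u, J u⟫ = ⟪J w, J w⟫`
    have h3 : ⟪J w, J w⟫ + ⟪J u, J u⟫ = 0 := by
      rw [← hsym, inner_neg_left]; ring
    rw [inner_self_eq_norm_sq_to_K, inner_self_eq_norm_sq_to_K] at h3
    have h5 : (‖J w‖ : ℝ) ^ 2 + (‖J u‖ : ℝ) ^ 2 = 0 := by
      have h4 : ((‖J w‖ ^ 2 + ‖J u‖ ^ 2 : ℝ) : ℂ) = 0 := by push_cast; exact h3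
      exact_mod_cast h4
    have h6 : ‖J u‖ = 0 := by nlinarith [sq_nonneg ‖J w‖, sq_nonneg ‖J u‖]
    have h7 : J u = 0 := norm_eq_zero.mp h6
    calc u = J (J u) := (hJinv u).symm
      _ = J 0 := by rw [h7]
      _ = 0 := hJ0
  · -- backward direction
    intro hker
    have hmem' : ∀ u : H, J u ∈ S.adjoint.domain → u ∈ S.domain := by
      intro u h1
      classical
      let E2 := WithLp.linearEquiv 2 ℂ (H × H)
      let e := WithLp.prodContinuousLinearEquiv 2 ℂ H H
      let G : Submodule ℂ (WithLp 2 (H × H)) := S.graph.comap E2.toLinearMap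
      have hGset : (G : Set (WithLp 2 (H × H))) = ⇑e ⁻¹' (S.graph : Set (H × H)) := rfl
      have hGc : IsClosed (G : Set (WithLp 2 (H × H))) := by
        rw [hGset]; exact hclosed.preimage e.continuous
      haveI : CompleteSpace G := hGc.completeSpace_coe
      set w := J (S.adjoint ⟨J u, h1⟩) with hwdef
      set x : WithLp 2 (H × H) := E2.symm (u, w) with hxdef
      obtain ⟨y, hyG, z, hzO, hxyz⟩ := G.exists_add_mem_mem_orthogonal x
      have hy' : E2 y ∈ S.graph := hyG
      rw [LinearPMap.mem_graph_iff] at hy'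
      obtain ⟨p, hp1, hp2⟩ := hy'
      -- components of z
      have hEx : E2 x = (u, w) := rfl
      have hEz : E2 z = E2 x - E2 y := by
        rw [hxyz]; simp
      have ha : (E2 z).1 = u - (p : H) := by
        rw [hEz, hEx, hp1]; rfl
      have hb : (E2 z).2 = w - S p := by
        rw [hEz, hEx, hp2]; rfl
      set a := (E2 z).1 with hadef
      set b := (E2 z).2 with hbdef
      -- (i) `J a` is in the adjoint domain
      have hJa : J a ∈ S.adjoint.domain := by
        rw [ha, hJsub]
        exact Submodule.sub_mem _ h1 (hmem (p : H) p.2)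
      -- (ii) the value of the adjoint at `J a`
      have hsplit : (⟨J a, hJa⟩ : S.adjoint.domain) =
          ⟨J u, h1⟩ - ⟨J (p : H), hmem (p : H) p.2⟩ := by
        apply Subtype.ext
        show J a = J u - J (p : H)
        rw [ha, hJsub]
      have hb' : J (S.adjoint ⟨J a, hJa⟩) = b := by
        rw [hsplit, LinearPMap.map_sub, hJsub, ← hwdef]
        rw [hval (p : H) p.2 (hmem (p : H) p.2)]
        have hpe : (⟨(p : H), p.2⟩ : S.domain) = p := Subtype.ext rfl
        rw [hpe, hJinv, hb]
      -- (iii) orthogonality: `b ∈ dom S*` with `S* b = -a`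
      have horth : ∀ v : S.domain, ⟪(v : H), a⟫ + ⟪S v, b⟫ = 0 := by
        intro v
        have hg : E2.symm ((v : H), S v) ∈ G := S.mem_graph v
        have h0 := (Submodule.mem_orthogonal G z).mp hzO _ hg
        have h0' : ⟪(v : H), a⟫ + ⟪S v, b⟫ =
            @inner ℂ (WithLp 2 (H × H)) _ (E2.symm ((v : H), S v)) z := by
          rw [WithLp.prod_inner_apply]; rfl
        rw [h0', h0]
      have hadjid : ∀ v : S.domain, ⟪-a, (v : H)⟫ = ⟪b, S v⟫ := by
        intro v
        have h := horth v
        have h' := congrArg (starRingEnd ℂ) h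
        simp only [map_add, inner_conj_symm, map_zero] at h'
        rw [inner_neg_left]
        linear_combination -h'
      have hbdom : b ∈ S.adjoint.domain :=
        LinearPMap.mem_adjoint_domain_of_exists _ ⟨-a, hadjid⟩
      have hSb : S.adjoint ⟨b, hbdom⟩ = -a :=
        LinearPMap.adjoint_apply_eq hdense _ hadjid
      -- (iv) apply the kernel hypothesis
      have h2' : J (S.adjoint ⟨J a, hJa⟩) ∈ S.adjoint.domain := by
        rw [hb']; exact hbdom
      have hres : S.adjoint ⟨J (S.adjoint ⟨J a, hJa⟩), h2'⟩ = -a := by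
        have e1 : (⟨J (S.adjoint ⟨J a, hJa⟩), h2'⟩ : S.adjoint.domain) = ⟨b, hbdom⟩ :=
          Subtype.ext hb'
        rw [e1, hSb]
      have hz1 : a = 0 := hker a hJa h2' hres
      have hz2 : b = 0 := by
        have e0 : (⟨J a, hJa⟩ : S.adjoint.domain) = 0 := by
          apply Subtype.ext
          show J a = 0
          rw [hz1, hJ0]
        rw [← hb', e0, LinearPMap.map_zero, hJ0]
      have hz : z = 0 := by
        apply E2.injective
        rw [map_zero]
        exact Prod.ext hz1 hz2
      rw [hz, add_zero] at hxyz
      -- hence `x ∈ G`, i.e. `(u, w) ∈ graph S`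
      have hxG : E2 x ∈ S.graph := by rw [hxyz]; exact hyG
      rw [hEx, LinearPMap.mem_graph_iff] at hxG
      obtain ⟨q, hq1, _⟩ := hxG
      have hq1' : (q : H) = u := hq1
      exact hq1' ▸ q.2
    refine ⟨fun u => ⟨hmem u, hmem' u⟩, fun u hu hu' => ?_⟩
    rw [hval u hu hu', hJinv]
end
end

section
/- Let H be a complex Hilbert space, J a conjugation on H, and S a densely defined closed J-symmetric operator in H. Equip dom(J S* J) = J·dom(S*) with the inner product (u,v)_* = ⟨Ju, Jv⟩ + ⟨S* J u, S* J v⟩, which makes it a Hilbert space. Then dom(J S* J) decomposes as the (·,·)_*-orthogonal direct sum dom(J S* J) = dom(S) ⊕_* ker((S* J)² + I). -/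
/-!
`H × H` is the sum of the graph of the closed operator `S` and the rotated adjoint graph
`{(-S* b, b) : b ∈ dom S*}` (they are orthogonal complements). Splitting `(u, J S* J u)` this way
gives `u = v + w` with `v ∈ dom S` and `w = -S* b`; as `J S* J v = S v` by `J`-symmetry, this
forces `J S* J w = b`, hence `S* J S* J w = -w`. Using `⟨J a, b⟩ = ⟨J b, a⟩` twice,
`(v, w)_* = ⟨w, v⟩ + ⟨J S* J w, S v⟩ = ⟨w, v⟩ + ⟨S* J S* J w, v⟩ = 0` for such `w`, and a vector
lying in both summands is `(·,·)_*`-orthogonal to itself, hence zero.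
-/

noncomputable section

local notation "⟪" x ", " y "⟫" => @inner ℂ _ _ x y

/-- `w` belongs to `ker((S* J)² + I)`, i.e. `J w ∈ dom S*`, `J S* J w ∈ dom S*` and
`S* J S* J w = -w`. -/
def InKerAux {H : Type*} [NormedAddCommGroup H] [InnerProductSpace ℂ H] [CompleteSpace H]
    (J : H → H) (S : H →ₗ.[ℂ] H) (w : H) : Prop :=
  ∃ (h1 : J w ∈ S.adjoint.domain) (h2 : J (S.adjoint ⟨J w, h1⟩) ∈ S.adjoint.domain),
    S.adjoint ⟨J (S.adjoint ⟨J w, h1⟩), h2⟩ = -w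

open scoped InnerProductSpace LinearPMap

namespace LinearPMap

variable {𝕜 E F : Type*} [RCLike 𝕜] [NormedAddCommGroup E] [InnerProductSpace 𝕜 E]
  [NormedAddCommGroup F] [InnerProductSpace 𝕜 F] [CompleteSpace E] {T : E →ₗ.[𝕜] F}

theorem mem_graph_adjoint_iff (hT : Dense (T.domain : Set E)) {x : F} {y : E} :
    (x, y) ∈ T†.graph ↔ ∀ a b, (a, b) ∈ T.graph → ⟪b, x⟫_𝕜 = ⟪a, y⟫_𝕜 := by
  simp only [adjoint_graph_eq_graph_adjoint hT, Submodule.mem_adjoint_iff, sub_eq_zero]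

theorem exists_eq_graph_add_skew_graph_adjoint [CompleteSpace F]
    (hT : Dense (T.domain : Set E)) (hclosed : T.IsClosed) (p : E × F) :
    ∃ q r : E × F, q ∈ T.graph ∧ (r.2, -r.1) ∈ T†.graph ∧ p = q + r := by
  let K : Submodule 𝕜 (WithLp 2 (E × F)) :=
    T.graph.comap (WithLp.linearEquiv 2 𝕜 (E × F)).toLinearMap
  have : CompleteSpace K :=
    (hclosed.preimage (WithLp.prod_continuous_ofLp 2 E F)).completeSpace_coe
  obtain ⟨q, hq, r, hr, hp⟩ := K.exists_add_mem_mem_orthogonal (WithLp.toLp 2 p)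
  refine ⟨q.ofLp, r.ofLp, hq, (mem_graph_adjoint_iff hT).2 fun a b hab => ?_,
    by rw [← WithLp.ofLp_add, ← hp]⟩
  have := (Submodule.mem_orthogonal K r).1 hr (WithLp.toLp 2 (a, b)) hab
  rw [WithLp.prod_inner_apply, add_comm, ← eq_neg_iff_add_eq_zero] at this
  simpa only [inner_neg_right] using this

end LinearPMap

theorem eq_zero_of_inner_self_add_inner_self_eq_zero {𝕜 E F : Type*} [RCLike 𝕜]
    [NormedAddCommGroup E] [InnerProductSpace 𝕜 E] [NormedAddCommGroup F]
    [InnerProductSpace 𝕜 F] {x : E} {y : F} (h : ⟪x, x⟫_𝕜 + ⟪y, y⟫_𝕜 = 0) : x = 0 := by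
  have hxy : ⟪WithLp.toLp 2 (x, y), WithLp.toLp 2 (x, y)⟫_𝕜 = 0 := by
    rw [WithLp.prod_inner_apply]
    exact h
  exact congrArg (·.fst) (inner_self_eq_zero.1 hxy)

section Conjugation

variable {H : Type*} [NormedAddCommGroup H] [InnerProductSpace ℂ H] [CompleteSpace H]
  {J : H → H} {S : H →ₗ.[ℂ] H}

theorem inKerAux_iff {w : H} :
    InKerAux J S w ↔ ∃ y, (J w, y) ∈ S†.graph ∧ (J y, -w) ∈ S†.graph := by
  constructor
  · rintro ⟨h1, h2, h3⟩
    exact ⟨_, S†.mem_graph ⟨_, h1⟩, h3 ▸ S†.mem_graph ⟨_, h2⟩⟩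
  · rintro ⟨y, hy, hw⟩
    have h1 := LinearPMap.mem_domain_of_mem_graph hy
    obtain rfl := (LinearPMap.image_iff h1).2 hy
    have h2 := LinearPMap.mem_domain_of_mem_graph hw
    exact ⟨h1, h2, ((LinearPMap.image_iff h2).2 hw).symm⟩

theorem InKerAux.sub (hJadd : ∀ u v : H, J (u + v) = J u + J v) {w w' : H}
    (hw : InKerAux J S w) (hw' : InKerAux J S w') : InKerAux J S (w - w') := by
  have hJsub : ∀ u v : H, J (u - v) = J u - J v := map_sub (AddMonoidHom.mk' J hJadd)
  obtain ⟨y, hy, hyw⟩ := inKerAux_iff.1 hw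
  obtain ⟨y', hy', hyw'⟩ := inKerAux_iff.1 hw'
  refine inKerAux_iff.2 ⟨y - y', ?_, ?_⟩
  · rw [hJsub]
    exact sub_mem hy hy'
  · rw [hJsub, neg_sub, ← neg_sub_neg w w']
    exact sub_mem hyw hyw'

theorem conj_mem_graph_adjoint (hdense : Dense (S.domain : Set H))
    (hJsym : ∀ u v : S.domain, ⟪S v, J (u : H)⟫ = ⟪(v : H), J (S u)⟫) {v y : H}
    (h : (v, y) ∈ S.graph) : (J v, J y) ∈ S†.graph := by
  simp only [LinearPMap.mem_graph_iff] at h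
  obtain ⟨v, rfl, rfl⟩ := h
  refine (LinearPMap.mem_graph_adjoint_iff hdense).2 fun a b hab => ?_
  simp only [LinearPMap.mem_graph_iff] at hab
  obtain ⟨a, rfl, rfl⟩ := hab
  exact hJsym v a

theorem exists_decomposition_of_conj_mem_domain_adjoint
    (hJadd : ∀ u v : H, J (u + v) = J u + J v) (hJinv : ∀ u : H, J (J u) = u)
    (hdense : Dense (S.domain : Set H)) (hclosed : S.IsClosed)
    (hJsym : ∀ u v : S.domain, ⟪S v, J (u : H)⟫ = ⟪(v : H), J (S u)⟫) {u : H}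
    (hu : J u ∈ S†.domain) : ∃ v w : H, v ∈ S.domain ∧ InKerAux J S w ∧ u = v + w := by
  have hJsub : ∀ u v : H, J (u - v) = J u - J v := map_sub (AddMonoidHom.mk' J hJadd)
  obtain ⟨⟨v, y⟩, ⟨a, b⟩, hvy, hab, hp⟩ :=
    S.exists_eq_graph_add_skew_graph_adjoint hdense hclosed (u, J (S† ⟨J u, hu⟩))
  rw [Prod.mk_add_mk, Prod.mk.injEq] at hp
  obtain ⟨huva, hyb⟩ := hp
  have hJa : J a = J u - J v := by rw [huva, hJadd, add_sub_cancel_left]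
  have hJb : J b = S† ⟨J u, hu⟩ - J y := by rw [eq_sub_of_add_eq' hyb.symm, hJsub, hJinv]
  refine ⟨v, a, S.mem_domain_of_mem_graph hvy, inKerAux_iff.2 ⟨J b, ?_, by rwa [hJinv]⟩, huva⟩
  rw [hJa, hJb]
  exact sub_mem (S†.mem_graph ⟨J u, hu⟩) (conj_mem_graph_adjoint hdense hJsym hvy)

theorem inner_add_inner_adjoint_eq_zero_of_inKerAux (hJinv : ∀ u : H, J (J u) = u)
    (hJinner : ∀ u v : H, ⟪J u, v⟫ = ⟪J v, u⟫) (hdense : Dense (S.domain : Set H))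
    (hJsym : ∀ u v : S.domain, ⟪S v, J (u : H)⟫ = ⟪(v : H), J (S u)⟫) {v w : H}
    (hv : v ∈ S.domain) (hv' : J v ∈ S†.domain) (hw : J w ∈ S†.domain)
    (hker : InKerAux J S w) : ⟪J v, J w⟫ + ⟪S† ⟨J v, hv'⟩, S† ⟨J w, hw⟩⟫ = 0 := by
  obtain ⟨y, hy, hyw⟩ := inKerAux_iff.1 hker
  have hSw : S† ⟨J w, hw⟩ = y := ((LinearPMap.image_iff hw).2 hy).symm
  have hSv : S† ⟨J v, hv'⟩ = J (S ⟨v, hv⟩) := ((LinearPMap.image_iff hv').2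
    (conj_mem_graph_adjoint hdense hJsym (S.mem_graph ⟨v, hv⟩))).symm
  have hadj : ⟪S ⟨v, hv⟩, J y⟫ = ⟪v, -w⟫ :=
    (LinearPMap.mem_graph_adjoint_iff hdense).1 hyw _ _ (S.mem_graph ⟨v, hv⟩)
  calc ⟪J v, J w⟫ + ⟪S† ⟨J v, hv'⟩, S† ⟨J w, hw⟩⟫
      = ⟪w, v⟫ + (starRingEnd ℂ) ⟪S ⟨v, hv⟩, J y⟫ := by
        rw [hSv, hSw, hJinner v, hJinv, hJinner, inner_conj_symm]
    _ = 0 := by rw [hadj, inner_conj_symm, inner_neg_left, add_neg_cancel]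

theorem eq_zero_of_mem_domain_of_inKerAux (hJinv : ∀ u : H, J (J u) = u)
    (hJinner : ∀ u v : H, ⟪J u, v⟫ = ⟪J v, u⟫) (hdense : Dense (S.domain : Set H))
    (hJsym : ∀ u v : S.domain, ⟪S v, J (u : H)⟫ = ⟪(v : H), J (S u)⟫) {v : H}
    (hv : v ∈ S.domain) (hker : InKerAux J S v) : v = 0 := by
  have h := inner_add_inner_adjoint_eq_zero_of_inKerAux hJinv hJinner hdense hJsym hv
    hker.1 hker.1 hker
  rw [hJinner v, hJinv] at h
  exact eq_zero_of_inner_self_add_inner_self_eq_zero h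

end Conjugation

theorem Race_decomposition_general
    {H : Type*} [NormedAddCommGroup H] [InnerProductSpace ℂ H] [CompleteSpace H]
    (J : H → H)
    (hJadd : ∀ u v : H, J (u + v) = J u + J v)
    (hJinv : ∀ u : H, J (J u) = u)
    (hJinner : ∀ u v : H, ⟪J u, v⟫ = ⟪J v, u⟫)
    (S : H →ₗ.[ℂ] H)
    (hdense : Dense (S.domain : Set H))
    (hclosed : IsClosed (S.graph : Set (H × H)))
    (hJsym : ∀ u v : S.domain, ⟪S v, J (u : H)⟫ = ⟪(v : H), J (S u)⟫) :
    -- `dom S ⊆ dom (J S* J)`: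
    (∀ v : H, v ∈ S.domain → J v ∈ S.adjoint.domain) ∧
    -- existence of the decomposition:
    (∀ u : H, J u ∈ S.adjoint.domain →
      ∃ v w : H, v ∈ S.domain ∧ InKerAux J S w ∧ u = v + w) ∧
    -- `(·,·)_*`-orthogonality of `dom S` and `ker((S* J)² + I)`:
    (∀ (v w : H) (hv : v ∈ S.domain) (hv' : J v ∈ S.adjoint.domain)
        (hw : J w ∈ S.adjoint.domain), InKerAux J S w →
        ⟪J v, J w⟫ + ⟪S.adjoint ⟨J v, hv'⟩, S.adjoint ⟨J w, hw⟩⟫ = 0) ∧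
    -- uniqueness of the decomposition:
    (∀ v v' w w' : H, v ∈ S.domain → v' ∈ S.domain → InKerAux J S w → InKerAux J S w' →
      v + w = v' + w' → v = v' ∧ w = w') := by
  refine ⟨fun v hv => S†.mem_domain_of_mem_graph
      (conj_mem_graph_adjoint hdense hJsym (S.mem_graph ⟨v, hv⟩)),
    fun u hu =>
      exists_decomposition_of_conj_mem_domain_adjoint hJadd hJinv hdense hclosed hJsym hu,
    fun v w hv hv' hw hker =>
      inner_add_inner_adjoint_eq_zero_of_inKerAux hJinv hJinner hdense hJsym hv hv' hw hker,
    fun v v' w w' hv hv' hw hw' hsum => ?_⟩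
  have hdiff : v - v' = w' - w := by rw [sub_eq_sub_iff_add_eq_add, hsum, add_comm]
  have h0 : v - v' = 0 := eq_zero_of_mem_domain_of_inKerAux hJinv hJinner hdense hJsym
    (sub_mem hv hv') (hdiff ▸ hw'.sub hJadd hw)
  exact ⟨sub_eq_zero.1 h0, (sub_eq_zero.1 (hdiff ▸ h0)).symm⟩

/-- Race's decomposition: let `H` be a complex Hilbert space, `J` a
conjugation on `H`, and `S` a densely defined closed `J`-symmetric operator. With the inner
product `(u,v)_* = ⟪Ju, Jv⟫ + ⟪S* J u, S* J v⟫` on `dom(J S* J) = J·dom(S*)`, one has the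
`(·,·)_*`-orthogonal decomposition `dom(J S* J) = dom(S) ⊕_* ker((S* J)² + I)`:
`dom S ⊆ dom(J S* J)`, every `u ∈ dom(J S* J)` decomposes as `u = v + w` with `v ∈ dom S` and
`w ∈ ker((S* J)² + I)`, the two subspaces are `(·,·)_*`-orthogonal, and the decomposition is
unique. -/
theorem Race_decomposition
    {H : Type*} [NormedAddCommGroup H] [InnerProductSpace ℂ H] [CompleteSpace H]
    (J : H → H)
    (hJadd : ∀ u v : H, J (u + v) = J u + J v)
    (hJsmul : ∀ (c : ℂ) (u : H), J (c • u) = (starRingEnd ℂ) c • J u)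
    (hJinv : ∀ u : H, J (J u) = u)
    (hJinner : ∀ u v : H, ⟪J u, v⟫ = ⟪J v, u⟫)
    (S : H →ₗ.[ℂ] H)
    (hdense : Dense (S.domain : Set H))
    (hclosed : IsClosed (S.graph : Set (H × H)))
    (hJsym : ∀ u v : S.domain, ⟪S v, J (u : H)⟫ = ⟪(v : H), J (S u)⟫) :
    -- `dom S ⊆ dom (J S* J)`:
    (∀ v : H, v ∈ S.domain → J v ∈ S.adjoint.domain) ∧
    -- existence of the decomposition:
    (∀ u : H, J u ∈ S.adjoint.domain →
      ∃ v w : H, v ∈ S.domain ∧ InKerAux J S w ∧ u = v + w) ∧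
    -- `(·,·)_*`-orthogonality of `dom S` and `ker((S* J)² + I)`:
    (∀ (v w : H) (hv : v ∈ S.domain) (hv' : J v ∈ S.adjoint.domain)
        (hw : J w ∈ S.adjoint.domain), InKerAux J S w →
        ⟪J v, J w⟫ + ⟪S.adjoint ⟨J v, hv'⟩, S.adjoint ⟨J w, hw⟩⟫ = 0) ∧
    -- uniqueness of the decomposition:
    (∀ v v' w w' : H, v ∈ S.domain → v' ∈ S.domain → InKerAux J S w → InKerAux J S w' →
      v + w = v' + w' → v = v' ∧ w = w') :=
  Race_decomposition_general J hJadd hJinv hJinner S hdense hclosed hJsym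
end
end
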